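/- Let A be symmetric with eigendecomposition A = VΛV^T + V_⊥Λ_⊥V_⊥^T, where the diagonal entries of Λ are λ₁ ≥ ... ≥ λ_r > 0 and those of Λ_⊥ have absolute value at most λ_{r+1} < λ_r. Suppose Q_t R_t = A^t Q₀ with R_t invertible and ‖R_t^{-1}‖₂ ≤ λ_r^{-t}/√(1−d₀²), where d₀ := ‖V_⊥^T Q₀‖₂ < 1. If additionally ‖V_⊥ Λ_⊥^t V_⊥^T‖_∞ ≤ C λ_{r+1}^t ‖V_⊥ V_⊥^T‖_∞, then ‖V_⊥ V_⊥^T Q_t‖_{2→∞} ≤ (λ_{r+1}/λ_r)^t · C ‖V_⊥ V_⊥^T‖_∞ · dist_{2→∞}(Q₀, V) / √(1−d₀²). -/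

import Mathlib

open Matrix BigOperators

/-- ℓ2 norm of the i-th row of a matrix. -/
noncomputable def row2 {m n : ℕ} (A : Matrix (Fin m) (Fin n) ℝ) (i : Fin m) : ℝ :=
  Real.sqrt (∑ j, (A i j) ^ 2)

/-- The ℓ2→∞ norm: maximum row ℓ2 norm. -/
noncomputable def norm2inf {m n : ℕ} (A : Matrix (Fin m) (Fin n) ℝ) : ℝ :=
  ⨆ i, row2 A i

/-- The ℓ∞→ℓ∞ operator norm: maximum row ℓ1 norm. -/
noncomputable def normInfOp {m n : ℕ} (A : Matrix (Fin m) (Fin n) ℝ) : ℝ :=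
  ⨆ i, ∑ j, |A i j|

/-- The spectral (ℓ2 operator) norm: sup over unit vectors of ‖Ax‖₂. -/
noncomputable def specNorm {m n : ℕ} (A : Matrix (Fin m) (Fin n) ℝ) : ℝ :=
  ⨆ x : {x : Fin n → ℝ // ∑ j, (x j) ^ 2 = 1}, Real.sqrt (∑ i, (A.mulVec x.1 i) ^ 2)

/-- The Frobenius norm. -/
noncomputable def frobNorm {m n : ℕ} (A : Matrix (Fin m) (Fin n) ℝ) : ℝ :=
  Real.sqrt (∑ i, ∑ j, (A i j) ^ 2)

/-- The smallest singular value: inf over unit vectors of ‖Mx‖₂. -/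
noncomputable def sigmaMin {r : ℕ} (M : Matrix (Fin r) (Fin r) ℝ) : ℝ :=
  ⨅ x : {x : Fin r → ℝ // ∑ j, (x j) ^ 2 = 1}, Real.sqrt (∑ i, (M.mulVec x.1 i) ^ 2)

/-- The ℓ2→∞ subspace distance: inf over orthogonal Z of ‖Q - V Z‖_{2→∞}. -/
noncomputable def dist2inf {n r : ℕ} (Q V : Matrix (Fin n) (Fin r) ℝ) : ℝ :=
  ⨅ Z : {Z : Matrix (Fin r) (Fin r) ℝ // Zᵀ * Z = 1}, norm2inf (Q - V * Z.1)

/-! For every orthogonal `Z`, `V_⊥ᵀ V = 0` and `V_⊥ᵀ Aᵗ = Λ_⊥ᵗ V_⊥ᵀ` give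
`V_⊥ V_⊥ᵀ Q_t = (V_⊥ Λ_⊥ᵗ V_⊥ᵀ) (Q₀ - V Z) R_t⁻¹`. The 2→∞ norm of a product is at most the
∞-operator norm of the left factor times the spectral norm of the right factor times the 2→∞ norm
of the middle one; taking the infimum over `Z` and inserting the bounds on `V_⊥ Λ_⊥ᵗ V_⊥ᵀ` and
`R_t⁻¹` gives the claim. -/

open scoped Matrix.Norms.L2Operator

lemma row2_eq_norm {m k : ℕ} (A : Matrix (Fin m) (Fin k) ℝ) (i : Fin m) :
    row2 A i = ‖WithLp.toLp 2 (A i)‖ := by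
  simp [row2, EuclideanSpace.norm_eq]

lemma specNorm_nonneg {m k : ℕ} (M : Matrix (Fin m) (Fin k) ℝ) : 0 ≤ specNorm M :=
  Real.iSup_nonneg fun _ => Real.sqrt_nonneg _

lemma l2_opNorm_le_specNorm {m k : ℕ} (M : Matrix (Fin m) (Fin k) ℝ) : ‖M‖ ≤ specNorm M := by
  have hbdd : BddAbove (Set.range fun x : {x : Fin k → ℝ // ∑ j, x j ^ 2 = 1} =>
      Real.sqrt (∑ i, (M *ᵥ x.1) i ^ 2)) := by
    refine ⟨‖M‖, ?_⟩
    rintro _ ⟨x, rfl⟩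
    have := M.l2_opNorm_mulVec (WithLp.toLp 2 x.1)
    simpa [EuclideanSpace.norm_eq, x.2] using this
  refine ContinuousLinearMap.opNorm_le_of_unit_norm (specNorm_nonneg M) fun x hx => ?_
  have hx' : ∑ j, x j ^ 2 = 1 := by
    simpa [EuclideanSpace.norm_eq] using hx
  have := le_ciSup hbdd ⟨x.ofLp, hx'⟩
  simpa [EuclideanSpace.norm_eq, specNorm] using this

lemma norm2inf_nonneg {m k : ℕ} (A : Matrix (Fin m) (Fin k) ℝ) : 0 ≤ norm2inf A :=
  Real.iSup_nonneg fun _ => Real.sqrt_nonneg _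

lemma row2_le_norm2inf {m k : ℕ} (A : Matrix (Fin m) (Fin k) ℝ) (i : Fin m) :
    row2 A i ≤ norm2inf A :=
  le_ciSup (Set.finite_range _).bddAbove i

lemma normInfOp_nonneg {m k : ℕ} (A : Matrix (Fin m) (Fin k) ℝ) : 0 ≤ normInfOp A :=
  Real.iSup_nonneg fun _ => Finset.sum_nonneg fun _ _ => abs_nonneg _

lemma sum_abs_le_normInfOp {m k : ℕ} (A : Matrix (Fin m) (Fin k) ℝ) (i : Fin m) :
    ∑ j, |A i j| ≤ normInfOp A :=
  le_ciSup (f := fun i => ∑ j, |A i j|) (Set.finite_range _).bddAbove i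

lemma norm2inf_mul_le_norm2inf_mul_specNorm {m k l : ℕ} (B : Matrix (Fin m) (Fin k) ℝ)
    (R : Matrix (Fin k) (Fin l) ℝ) : norm2inf (B * R) ≤ norm2inf B * specNorm R := by
  refine Real.iSup_le (fun i => ?_) (mul_nonneg (norm2inf_nonneg B) (specNorm_nonneg R))
  calc row2 (B * R) i = ‖WithLp.toLp 2 (Rᵀ *ᵥ B i)‖ := by
        rw [row2_eq_norm, mulVec_transpose, mul_apply_eq_vecMul]
    _ ≤ ‖Rᵀ‖ * row2 B i := by rw [row2_eq_norm]; exact l2_opNorm_mulVec _ _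
    _ ≤ specNorm R * norm2inf B := by
        rw [← conjTranspose_eq_transpose_of_trivial, l2_opNorm_conjTranspose]
        exact mul_le_mul (l2_opNorm_le_specNorm R) (row2_le_norm2inf B i) (Real.sqrt_nonneg _)
          (specNorm_nonneg R)
    _ = norm2inf B * specNorm R := mul_comm _ _

lemma norm2inf_mul_le_normInfOp_mul_norm2inf {m k l : ℕ} (N : Matrix (Fin m) (Fin k) ℝ)
    (X : Matrix (Fin k) (Fin l) ℝ) : norm2inf (N * X) ≤ normInfOp N * norm2inf X := by
  refine Real.iSup_le (fun i => ?_) (mul_nonneg (normInfOp_nonneg N) (norm2inf_nonneg X))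
  calc row2 (N * X) i = ‖∑ j, N i j • WithLp.toLp 2 (X j)‖ := by
        rw [row2_eq_norm, mul_apply_eq_vecMul, vecMul_eq_sum, WithLp.toLp_sum]
        simp only [WithLp.toLp_smul]
    _ ≤ ∑ j, |N i j| * row2 X j := by
        refine (norm_sum_le _ _).trans_eq (Finset.sum_congr rfl fun j _ => ?_)
        rw [norm_smul, Real.norm_eq_abs, row2_eq_norm]
    _ ≤ ∑ j, |N i j| * norm2inf X :=
        Finset.sum_le_sum fun j _ =>
          mul_le_mul_of_nonneg_left (row2_le_norm2inf X j) (abs_nonneg _)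
    _ ≤ normInfOp N * norm2inf X := by
        rw [← Finset.sum_mul]
        exact mul_le_mul_of_nonneg_right (sum_abs_le_normInfOp N i) (norm2inf_nonneg X)

lemma norm2inf_mul_mul_le {m k l p : ℕ} (N : Matrix (Fin m) (Fin k) ℝ)
    (X : Matrix (Fin k) (Fin l) ℝ) (R : Matrix (Fin l) (Fin p) ℝ) :
    norm2inf (N * X * R) ≤ normInfOp N * specNorm R * norm2inf X :=
  calc norm2inf (N * X * R) ≤ normInfOp N * norm2inf X * specNorm R :=
        (norm2inf_mul_le_norm2inf_mul_specNorm _ _).trans <|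
          mul_le_mul_of_nonneg_right (norm2inf_mul_le_normInfOp_mul_norm2inf _ _) (specNorm_nonneg R)
    _ = normInfOp N * specNorm R * norm2inf X := mul_right_comm _ _ _

lemma dist2inf_nonneg {n r : ℕ} (Q V : Matrix (Fin n) (Fin r) ℝ) : 0 ≤ dist2inf Q V :=
  Real.iInf_nonneg fun _ => norm2inf_nonneg _

lemma le_mul_dist2inf {n r : ℕ} {Q V : Matrix (Fin n) (Fin r) ℝ} {x c : ℝ} (hc : 0 ≤ c)
    (h : ∀ Z : Matrix (Fin r) (Fin r) ℝ, Zᵀ * Z = 1 → x ≤ c * norm2inf (Q - V * Z)) :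
    x ≤ c * dist2inf Q V := by
  have : Nonempty {Z : Matrix (Fin r) (Fin r) ℝ // Zᵀ * Z = 1} := ⟨⟨1, by simp⟩⟩
  rw [dist2inf, Real.mul_iInf_of_nonneg hc]
  exact le_ciInf fun Z => h Z.1 Z.2

section SubspaceIteration

variable {R n r p : Type*} [CommRing R] [Fintype n] [Fintype r] [Fintype p]
  [DecidableEq n] [DecidableEq p]

lemma transpose_mul_pow_eq_pow_mul_transpose {A : Matrix n n R} {V : Matrix n r R}
    {Vp : Matrix n p R} {D : Matrix r r R} {Dp : Matrix p p R} (hVp : Vpᵀ * Vp = 1) (hperp : Vᵀ * Vp = 0)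
    (hA : A = V * D * Vᵀ + Vp * Dp * Vpᵀ) (t : ℕ) : Vpᵀ * A ^ t = Dp ^ t * Vpᵀ := by
  have hVpV : Vpᵀ * V = 0 := by rw [← transpose_transpose V, ← transpose_mul, hperp, transpose_zero]
  have hstep : Vpᵀ * A = Dp * Vpᵀ := by
    simp only [hA, Matrix.mul_add, ← Matrix.mul_assoc, hVpV, hVp, Matrix.zero_mul, Matrix.one_mul,
      zero_add]
  induction t with
  | zero => simp
  | succ t ih => rw [pow_succ, ← Matrix.mul_assoc, ih, Matrix.mul_assoc, hstep, ← Matrix.mul_assoc,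
      ← pow_succ]

lemma mul_transpose_mul_eq_of_iteration [DecidableEq r] {A : Matrix n n R} {V Q₀ Qₜ : Matrix n r R}
    {Vp : Matrix n p R} {D : Matrix r r R} {Dp : Matrix p p R} {Rₜ Rₜinv : Matrix r r R} {t : ℕ}
    (hVp : Vpᵀ * Vp = 1) (hperp : Vᵀ * Vp = 0) (hA : A = V * D * Vᵀ + Vp * Dp * Vpᵀ)
    (hiter : Qₜ * Rₜ = A ^ t * Q₀) (hRt : Rₜ * Rₜinv = 1) (Z : Matrix r r R) :
    Vp * Vpᵀ * Qₜ = Vp * Dp ^ t * Vpᵀ * (Q₀ - V * Z) * Rₜinv := by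
  have hQt : Qₜ = A ^ t * Q₀ * Rₜinv := by rw [← hiter, Matrix.mul_assoc, hRt, Matrix.mul_one]
  have hVpV : Vpᵀ * (V * Z) = 0 := by
    rw [← Matrix.mul_assoc, ← transpose_transpose V, ← transpose_mul, hperp, transpose_zero,
      Matrix.zero_mul]
  calc Vp * Vpᵀ * Qₜ = Vp * (Vpᵀ * A ^ t) * Q₀ * Rₜinv := by simp only [hQt, Matrix.mul_assoc]
    _ = Vp * Dp ^ t * (Vpᵀ * (Q₀ - V * Z)) * Rₜinv := by
        rw [transpose_mul_pow_eq_pow_mul_transpose hVp hperp hA, Matrix.mul_sub, hVpV, sub_zero]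
        simp only [Matrix.mul_assoc]
    _ = Vp * Dp ^ t * Vpᵀ * (Q₀ - V * Z) * Rₜinv := by simp only [Matrix.mul_assoc]

end SubspaceIteration

theorem subspace_iteration_perp_two_to_inf_bound_general {n r : ℕ} (t : ℕ)
    (A : Matrix (Fin n) (Fin n) ℝ)
    (V Q0 Qt : Matrix (Fin n) (Fin r) ℝ)
    (Vp : Matrix (Fin n) (Fin (n - r)) ℝ)
    (d : Fin r → ℝ) (dp : Fin (n - r) → ℝ)
    (Rt Rtinv : Matrix (Fin r) (Fin r) ℝ)
    (lamr lamr1 C d0 : ℝ)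
    (hVp : Vpᵀ * Vp = 1) (hperp : Vᵀ * Vp = 0)
    (hA : A = V * Matrix.diagonal d * Vᵀ + Vp * Matrix.diagonal dp * Vpᵀ)
    (hiter : Qt * Rt = A ^ t * Q0)
    (hRt : Rt * Rtinv = 1)
    (hRtinv : specNorm Rtinv ≤ (lamr ^ t)⁻¹ / Real.sqrt (1 - d0 ^ 2))
    (hAsm : normInfOp (Vp * (Matrix.diagonal dp) ^ t * Vpᵀ)
      ≤ C * lamr1 ^ t * normInfOp (Vp * Vpᵀ)) :
    norm2inf (Vp * Vpᵀ * Qt)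
      ≤ (lamr1 / lamr) ^ t * C * normInfOp (Vp * Vpᵀ) * dist2inf Q0 V
          / Real.sqrt (1 - d0 ^ 2) := by
  set P := Vp * (Matrix.diagonal dp) ^ t * Vpᵀ
  have hP := normInfOp_nonneg P
  calc norm2inf (Vp * Vpᵀ * Qt) ≤ normInfOp P * specNorm Rtinv * dist2inf Q0 V :=
        le_mul_dist2inf (mul_nonneg hP (specNorm_nonneg _)) fun Z _ => by
          rw [mul_transpose_mul_eq_of_iteration hVp hperp hA hiter hRt Z]
          exact norm2inf_mul_mul_le _ _ _
    _ ≤ C * lamr1 ^ t * normInfOp (Vp * Vpᵀ) * ((lamr ^ t)⁻¹ / Real.sqrt (1 - d0 ^ 2))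
          * dist2inf Q0 V :=
        mul_le_mul_of_nonneg_right (mul_le_mul hAsm hRtinv (specNorm_nonneg _) (hP.trans hAsm))
          (dist2inf_nonneg _ _)
    _ = (lamr1 / lamr) ^ t * C * normInfOp (Vp * Vpᵀ) * dist2inf Q0 V
          / Real.sqrt (1 - d0 ^ 2) := by rw [div_pow]; ring

/-- convergence of the orthogonal component of subspace iteration
in the ℓ2→∞ norm under the norm bound assumption on V_⊥ Λ_⊥ᵗ V_⊥ᵀ. -/
theorem subspace_iteration_perp_two_to_inf_bound {n r : ℕ} (t : ℕ)
    (A : Matrix (Fin n) (Fin n) ℝ)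
    (V Q0 Qt : Matrix (Fin n) (Fin r) ℝ)
    (Vp : Matrix (Fin n) (Fin (n - r)) ℝ)
    (d : Fin r → ℝ) (dp : Fin (n - r) → ℝ)
    (Rt Rtinv : Matrix (Fin r) (Fin r) ℝ)
    (lamr lamr1 C d0 : ℝ)
    (hV : Vᵀ * V = 1) (hVp : Vpᵀ * Vp = 1) (hperp : Vᵀ * Vp = 0)
    (hA : A = V * Matrix.diagonal d * Vᵀ + Vp * Matrix.diagonal dp * Vpᵀ)
    (hlam_pos : 0 < lamr)
    (hlam_lower : ∀ i, lamr ≤ d i)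
    (hlam_upper : ∀ i, |dp i| ≤ lamr1)
    (hgap : lamr1 < lamr)
    (hQ0 : Q0ᵀ * Q0 = 1) (hQt : Qtᵀ * Qt = 1)
    (hiter : Qt * Rt = A ^ t * Q0)
    (hRt : Rt * Rtinv = 1) (hRt' : Rtinv * Rt = 1)
    (hd0 : specNorm (Vpᵀ * Q0) = d0) (hd0lt : d0 < 1)
    (hRtinv : specNorm Rtinv ≤ (lamr ^ t)⁻¹ / Real.sqrt (1 - d0 ^ 2))
    (hAsm : normInfOp (Vp * (Matrix.diagonal dp) ^ t * Vpᵀ)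
      ≤ C * lamr1 ^ t * normInfOp (Vp * Vpᵀ)) :
    norm2inf (Vp * Vpᵀ * Qt)
      ≤ (lamr1 / lamr) ^ t * C * normInfOp (Vp * Vpᵀ) * dist2inf Q0 V
          / Real.sqrt (1 - d0 ^ 2) :=
  subspace_iteration_perp_two_to_inf_bound_general t A V Q0 Qt Vp d dp Rt Rtinv lamr lamr1 C d0 hVp
    hperp hA hiter hRt hRtinv hAsm
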